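/- arXiv:1503.04530 — 2 statements merged into one kernel-verified Lean document; each statement's English description precedes it below -/
import Mathlib

section
/- Let f : I → ℝ be differentiable with |f'(x) − f'(y)| ≤ K|x−y|^γ for some γ ∈ (0,1], K > 0, and suppose κ ≤ f ≤ M on I with κ, M > 0, i.e. f ∈ F_{(γ,K,κ,M)}. Then |f'(x)| ≤ 2M + K for all x ∈ I (assuming I has length at least 1), and √f ∈ F_{(γ, K/√κ, √κ, √M)} up to a multiplicative constant in the Hölder constant, i.e. √f is differentiable with √κ ≤ √f ≤ √M and |(√f)'(x) − (√f)'(y)| ≤ C (K/√κ)|x−y|^γ for some constant C. -/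
set_option maxHeartbeats 1000000 in
theorem stmt11 (a b : ℝ) (hab : a + 1 ≤ b) (f f' : ℝ → ℝ) (γ K κ M : ℝ)
    (hγ : 0 < γ) (hγ1 : γ ≤ 1) (hK : 0 < K) (hκ : 0 < κ) (hκM : κ ≤ M)
    (hderiv : ∀ x ∈ Set.Icc a b, HasDerivAt f (f' x) x)
    (hHolder : ∀ x ∈ Set.Icc a b, ∀ y ∈ Set.Icc a b, |f' x - f' y| ≤ K * |x - y| ^ γ)
    (hbound : ∀ x ∈ Set.Icc a b, κ ≤ f x ∧ f x ≤ M) :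
    (∀ x ∈ Set.Icc a b, |f' x| ≤ 2 * M + K) ∧
    ∃ C > (0 : ℝ),
      (∀ x ∈ Set.Icc a b, Real.sqrt κ ≤ Real.sqrt (f x) ∧ Real.sqrt (f x) ≤ Real.sqrt M) ∧
      (∀ x ∈ Set.Icc a b,
        HasDerivAt (fun z => Real.sqrt (f z)) (f' x / (2 * Real.sqrt (f x))) x) ∧
      ∀ x ∈ Set.Icc a b, ∀ y ∈ Set.Icc a b,
        |f' x / (2 * Real.sqrt (f x)) - f' y / (2 * Real.sqrt (f y))|
          ≤ C * (K / Real.sqrt κ) * |x - y| ^ γ := by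
  have hM : 0 < M := lt_of_lt_of_le hκ hκM
  have hcont : ContinuousOn f (Set.Icc a b) := fun x hx =>
    (hderiv x hx).continuousAt.continuousWithinAt
  -- Part 1: bound on f'
  have key : ∀ p z : ℝ, a ≤ p → p + 1/2 ≤ b → z ∈ Set.Icc p (p + 1/2) →
      |f' z| ≤ 2 * M + K := by
    intro p z hap hpb hz
    have hsub : Set.Icc p (p + 1/2) ⊆ Set.Icc a b := Set.Icc_subset_Icc hap hpb
    obtain ⟨c, hc, hceq⟩ := exists_hasDerivAt_eq_slope f f' (by linarith : p < p + 1/2)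
      (hcont.mono hsub) (fun u hu => hderiv u (hsub (Set.Ioo_subset_Icc_self hu)))
    have hcmem : c ∈ Set.Icc a b := hsub (Set.Ioo_subset_Icc_self hc)
    have hzmem : z ∈ Set.Icc a b := hsub hz
    have h1 := hbound p (hsub (Set.left_mem_Icc.2 (by linarith)))
    have h2 := hbound (p + 1/2) (hsub (Set.right_mem_Icc.2 (by linarith)))
    have hfc : |f' c| ≤ 2 * M := by
      rw [hceq]
      have heq : p + 1/2 - p = 1/2 := by ring
      rw [heq, abs_div, abs_of_pos (by norm_num : (0:ℝ) < 1/2),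
        div_le_iff₀ (by norm_num : (0:ℝ) < 1/2), abs_le]
      constructor <;> linarith [h1.1, h1.2, h2.1, h2.2]
    have hzc : |z - c| ≤ 1 := by
      rw [abs_le]
      obtain ⟨hc1, hc2⟩ := hc; obtain ⟨hz1, hz2⟩ := hz
      constructor <;> linarith
    have hh := hHolder z hzmem c hcmem
    have hpow : |z - c| ^ γ ≤ 1 := Real.rpow_le_one (abs_nonneg _) hzc hγ.le
    have htri : |f' z| ≤ |f' c| + |f' z - f' c| := by
      have := abs_sub_abs_le_abs_sub (f' z) (f' c); linarith
    have hK1 : K * |z - c| ^ γ ≤ K * 1 := by nlinarith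
    linarith
  have hfb : ∀ x ∈ Set.Icc a b, |f' x| ≤ 2 * M + K := by
    intro x hx
    rcases le_or_gt x ((a + b) / 2) with h | h
    · exact key x x hx.1 (by linarith) ⟨le_refl x, by linarith⟩
    · exact key (x - 1/2) x (by linarith) (by linarith [hx.2]) ⟨by linarith, by linarith⟩
  refine ⟨hfb, ?_⟩
  set B : ℝ := 2 * M + K with hB
  have hBpos : 0 < B := by positivity
  have hsκ : 0 < Real.sqrt κ := Real.sqrt_pos.2 hκ
  set P : ℝ := (b - a) ^ (1 - γ) with hP
  have hPpos : 0 < P := Real.rpow_pos_of_pos (by linarith) _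
  -- sqrt bounds
  have hsb : ∀ x ∈ Set.Icc a b, Real.sqrt κ ≤ Real.sqrt (f x) ∧ Real.sqrt (f x) ≤ Real.sqrt M :=
    fun x hx => ⟨Real.sqrt_le_sqrt (hbound x hx).1, Real.sqrt_le_sqrt (hbound x hx).2⟩
  -- derivative of sqrt ∘ f
  have hsderiv : ∀ x ∈ Set.Icc a b,
      HasDerivAt (fun z => Real.sqrt (f z)) (f' x / (2 * Real.sqrt (f x))) x :=
    fun x hx => (hderiv x hx).sqrt (by linarith [(hbound x hx).1])
  -- Lipschitz bound on f
  have hlip : ∀ x ∈ Set.Icc a b, ∀ y ∈ Set.Icc a b, |f y - f x| ≤ B * |y - x| := by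
    intro x hx y hy
    have := Convex.norm_image_sub_le_of_norm_hasDerivWithin_le
      (f' := f') (fun z hz => (hderiv z hz).hasDerivWithinAt)
      (fun z hz => by rw [Real.norm_eq_abs]; exact hfb z hz)
      (convex_Icc a b) hx hy
    simpa [Real.norm_eq_abs] using this
  -- |x-y| ≤ P * |x-y|^γ
  have hpw : ∀ x ∈ Set.Icc a b, ∀ y ∈ Set.Icc a b, |x - y| ≤ P * |x - y| ^ γ := by
    intro x hx y hy
    rcases eq_or_lt_of_le (abs_nonneg (x - y)) with h0 | h0
    · rw [← h0, Real.zero_rpow hγ.ne', mul_zero]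
    · have hle : |x - y| ≤ b - a := by
        rw [abs_le]
        constructor <;> [linarith [hx.1, hy.2]; linarith [hx.2, hy.1]]
      calc |x - y| = |x - y| ^ (1 - γ) * |x - y| ^ γ := by
            rw [← Real.rpow_add h0]; norm_num
        _ ≤ P * |x - y| ^ γ := by
            have : |x - y| ^ (1 - γ) ≤ P :=
              Real.rpow_le_rpow (abs_nonneg _) hle (by linarith)
            have hTnn : (0:ℝ) ≤ |x - y| ^ γ := Real.rpow_nonneg (abs_nonneg _) _
            nlinarith
  -- sqrt difference bound
  have hsd : ∀ x ∈ Set.Icc a b, ∀ y ∈ Set.Icc a b,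
      |Real.sqrt (f x) - Real.sqrt (f y)| ≤ |f x - f y| / (2 * Real.sqrt κ) := by
    intro x hx y hy
    have hsx := (hsb x hx).1
    have hsy := (hsb y hy).1
    have hx2 : Real.sqrt (f x) ^ 2 = f x := Real.sq_sqrt (by linarith [(hbound x hx).1])
    have hy2 : Real.sqrt (f y) ^ 2 = f y := Real.sq_sqrt (by linarith [(hbound y hy).1])
    rw [le_div_iff₀ (by positivity)]
    have hprod : (Real.sqrt (f x) - Real.sqrt (f y)) * (Real.sqrt (f x) + Real.sqrt (f y))
        = f x - f y := by nlinarith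
    calc |Real.sqrt (f x) - Real.sqrt (f y)| * (2 * Real.sqrt κ)
        ≤ |Real.sqrt (f x) - Real.sqrt (f y)| * (Real.sqrt (f x) + Real.sqrt (f y)) := by
          have := abs_nonneg (Real.sqrt (f x) - Real.sqrt (f y))
          nlinarith
      _ = |(Real.sqrt (f x) - Real.sqrt (f y)) * (Real.sqrt (f x) + Real.sqrt (f y))| := by
          rw [abs_mul, abs_of_pos (show (0:ℝ) < Real.sqrt (f x) + Real.sqrt (f y) by linarith)]
      _ = |f x - f y| := by rw [hprod]
  refine ⟨1/2 + B ^ 2 * P / (4 * κ * K), ?_, hsb, hsderiv, ?_⟩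
  · have : 0 ≤ B ^ 2 * P / (4 * κ * K) := by positivity
    linarith
  intro x hx y hy
  set sx := Real.sqrt (f x) with hsxdef
  set sy := Real.sqrt (f y) with hsydef
  have hsx := (hsb x hx).1
  have hsy := (hsb y hy).1
  have hsxpos : 0 < sx := lt_of_lt_of_le hsκ hsx
  have hsypos : 0 < sy := lt_of_lt_of_le hsκ hsy
  set T : ℝ := |x - y| ^ γ with hT
  have hTnn : 0 ≤ T := Real.rpow_nonneg (abs_nonneg _) _
  have heq : f' x / (2 * sx) - f' y / (2 * sy)
      = (f' x - f' y) / (2 * sx) + f' y * (sy - sx) / (2 * (sx * sy)) := by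
    field_simp; ring
  have hT1 : |(f' x - f' y) / (2 * sx)| ≤ K * T / (2 * Real.sqrt κ) := by
    rw [abs_div, abs_of_pos (show (0:ℝ) < 2 * sx by positivity)]
    apply div_le_div₀ (by positivity) (hHolder x hx y hy) (by positivity) (by linarith)
  have hT2 : |f' y * (sy - sx) / (2 * (sx * sy))|
      ≤ B * (B * (P * T) / (2 * Real.sqrt κ)) / (2 * κ) := by
    rw [abs_div, abs_of_pos (show (0:ℝ) < 2 * (sx * sy) by positivity), abs_mul]
    have h1 : |f' y| ≤ B := hfb y hy
    have h2 : |sy - sx| ≤ B * (P * T) / (2 * Real.sqrt κ) := by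
      calc |sy - sx| ≤ |f y - f x| / (2 * Real.sqrt κ) := hsd y hy x hx
        _ ≤ B * (P * T) / (2 * Real.sqrt κ) := by
            apply div_le_div₀ (by positivity) ?_ (by positivity) le_rfl
            calc |f y - f x| ≤ B * |y - x| := hlip x hx y hy
              _ ≤ B * (P * T) := by
                  have : |y - x| ≤ P * T := by rw [abs_sub_comm]; exact hpw x hx y hy
                  nlinarith
    have h3 : 2 * κ ≤ 2 * (sx * sy) := by
      have : κ ≤ sx * sy := by nlinarith [Real.mul_self_sqrt hκ.le]
      linarith
    apply div_le_div₀ (by positivity) ?_ (by positivity) h3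
    exact mul_le_mul h1 h2 (abs_nonneg _) hBpos.le
  calc |f' x / (2 * sx) - f' y / (2 * sy)|
      ≤ |(f' x - f' y) / (2 * sx)| + |f' y * (sy - sx) / (2 * (sx * sy))| := by
        rw [heq]; exact abs_add_le _ _
    _ ≤ K * T / (2 * Real.sqrt κ) + B * (B * (P * T) / (2 * Real.sqrt κ)) / (2 * κ) := by
        linarith
    _ = (1/2 + B ^ 2 * P / (4 * κ * K)) * (K / Real.sqrt κ) * T := by
        field_simp; ring
end

section
/- Let k ≥ 1 and set x_{m−k}* = c·log(1 + 1/k) with c = ε_m(m−1). Then the ν₀-mass (with density 1/x²) of the triangular hat function centered at x_{m−k}* over [x_{m−k−1}*, x_{m−k+1}*], normalized by μ_m = 1/c, admits the expansions ∫_{x_{m−k−1}*}^{x_{m−k}*} Ṽ_{m−k}(x) ν₀(dx) = 1/2 − 1/(6k) + 5/(24k²) + O(1/k³) and ∫_{x_{m−k}*}^{x_{m−k+1}*} Ṽ_{m−k}(x) ν₀(dx) = 1/2 + 1/(6k) + 1/(24k²) + O(1/k³) as k → ∞. -/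
/-!
With `L₊ = log (1 + s)`, `L₋ = -log (1 - s)` and `ρ = L₋ / L₊`, the mass of a ramp is
`(ρ - 1 - log ρ) / (L₋ - L₊)`, taken at `s = 1 / k` for the right half of `Ṽ_{m-k}` and at
`s = -1 / (k + 1)` for the left half: the substitution `s ↦ -s` exchanges `L₊` and `-L₋`, and
the scale `c` cancels. Putting `y = ρ - 1 = -log (1 - s²) / L₊`, this mass is `ψ(y) / L₊` with
`ψ(y) = (y - log (1 + y)) / y = y/2 - y²/3 + y³/4 + O(y⁴)`, while
`y = s + s²/2 + 5s³/12 + O(s⁴)` and `L₊ = s - s²/2 + s³/3 + O(s⁴)`. Composing these expansions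
gives `1/2 + s/6 + s²/24 + O(s³)`; at `s = -1 / (k + 1)` this re-expands in `1 / k` to the
first formula.
-/

open Filter Asymptotics MeasureTheory Real Topology

theorem integral_affine_mul_inv_sq {a b : ℝ} (ha : 0 < a) (hab : a ≤ b) (p q : ℝ) :
    ∫ x in a..b, (p * x + q) * (x ^ 2)⁻¹ = p * log (b / a) + q * (a⁻¹ - b⁻¹) := by
  have hpos : ∀ x ∈ Set.uIcc a b, 0 < x := fun x hx =>
    ha.trans_le (by rw [Set.uIcc_of_le hab] at hx; exact hx.1)
  have hderiv : ∀ x ∈ Set.uIcc a b,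
      HasDerivAt (fun x => p * log x - q * x⁻¹) ((p * x + q) * (x ^ 2)⁻¹) x := by
    intro x hx
    have hx := (hpos x hx).ne'
    exact (((hasDerivAt_log hx).const_mul p).sub ((hasDerivAt_inv hx).const_mul q)).congr_deriv
      (by field_simp; ring)
  have hcont : ContinuousOn (fun x : ℝ => (p * x + q) * (x ^ 2)⁻¹) (Set.uIcc a b) :=
    (continuousOn_const.mul continuousOn_id |>.add continuousOn_const).mul
      ((continuousOn_pow 2).inv₀ fun x hx => (pow_pos (hpos x hx) 2).ne')
  rw [intervalIntegral.integral_eq_sub_of_hasDerivAt hderiv hcont.intervalIntegrable,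
    log_div (ha.trans_le hab).ne' ha.ne']
  ring

theorem setIntegral_rising_ramp {c α β : ℝ} (hc : 0 < c) (hα : 0 < α) (hαβ : α < β) :
    ∫ x in Set.Ioc (c * α) (c * β), c * ((x - c * α) / (c * β - c * α)) * (x ^ 2)⁻¹
      = (α / β - 1 - log (α / β)) / (β - α) := by
  have hβα : β - α ≠ 0 := sub_ne_zero.2 hαβ.ne'
  have hβ : 0 < β := hα.trans hαβ
  rw [← intervalIntegral.integral_of_le (by gcongr)]
  calc ∫ x in c * α..c * β, c * ((x - c * α) / (c * β - c * α)) * (x ^ 2)⁻¹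
      = ∫ x in c * α..c * β, ((β - α)⁻¹ * x + -(c * α / (β - α))) * (x ^ 2)⁻¹ := by
        congr 1; ext x; rw [← mul_sub]; field_simp; ring
    _ = _ := by
      rw [integral_affine_mul_inv_sq (by positivity) (by gcongr), mul_div_mul_left _ _ hc.ne',
        log_div hα.ne' hβ.ne', log_div hβ.ne' hα.ne']
      field_simp
      ring

theorem setIntegral_falling_ramp {c α β : ℝ} (hc : 0 < c) (hα : 0 < α) (hαβ : α < β) :
    ∫ x in Set.Ioc (c * α) (c * β), c * ((c * β - x) / (c * β - c * α)) * (x ^ 2)⁻¹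
      = (β / α - 1 - log (β / α)) / (β - α) := by
  have hβα : β - α ≠ 0 := sub_ne_zero.2 hαβ.ne'
  have hβ : 0 < β := hα.trans hαβ
  rw [← intervalIntegral.integral_of_le (by gcongr)]
  calc ∫ x in c * α..c * β, c * ((c * β - x) / (c * β - c * α)) * (x ^ 2)⁻¹
      = ∫ x in c * α..c * β, (-(β - α)⁻¹ * x + c * β / (β - α)) * (x ^ 2)⁻¹ := by
        congr 1; ext x; rw [← mul_sub]; field_simp; ring
    _ = _ := by
      rw [integral_affine_mul_inv_sq (by positivity) (by gcongr), mul_div_mul_left _ _ hc.ne']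
      field_simp
      ring

theorem isBigO_sum_add_log_one_sub (n : ℕ) :
    (fun x : ℝ => ∑ i ∈ Finset.range n, x ^ (i + 1) / (i + 1) + log (1 - x)) =O[𝓝 0]
      (· ^ (n + 1)) := by
  refine IsBigO.of_bound 2 ?_
  filter_upwards [Metric.ball_mem_nhds (0 : ℝ) (by norm_num : (0 : ℝ) < 1 / 2)] with x hx
  rw [Metric.mem_ball, dist_zero_right, norm_eq_abs] at hx
  rw [norm_eq_abs, norm_eq_abs, abs_pow]
  calc _ ≤ |x| ^ (n + 1) / (1 - |x|) := abs_log_sub_add_sum_range_le (by linarith) n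
    _ ≤ 2 * |x| ^ (n + 1) := by
      rw [div_le_iff₀ (by linarith)]
      nlinarith [pow_nonneg (abs_nonneg x) (n + 1)]

theorem isBigO_sum_neg_add_log_one_add (n : ℕ) :
    (fun x : ℝ => ∑ i ∈ Finset.range n, (-x) ^ (i + 1) / (i + 1) + log (1 + x)) =O[𝓝 0]
      (· ^ (n + 1)) := by
  have h := (isBigO_sum_add_log_one_sub n).comp_tendsto (by simpa using (tendsto_neg (0 : ℝ)))
  simp only [Function.comp_def, sub_neg_eq_add] at h
  exact h.trans (isBigO_of_le _ fun x => by rw [norm_pow, norm_pow, norm_neg])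

theorem isBigO_log_one_add_sub_self :
    (fun s : ℝ => log (1 + s) - s) =O[𝓝 0] (· ^ 2) :=
  (isBigO_sum_neg_add_log_one_add 1).congr_left fun s => by simp; ring

theorem isBigO_log_one_add_sub_cubic :
    (fun s : ℝ => log (1 + s) - (s - s ^ 2 / 2 + s ^ 3 / 3)) =O[𝓝 0] (· ^ 4) :=
  (isBigO_sum_neg_add_log_one_add 3).congr_left fun s => by simp [Finset.sum_range_succ]; ring

theorem isBigO_neg_log_one_sub_sq_sub :
    (fun s : ℝ => -log (1 - s ^ 2) - (s ^ 2 + s ^ 4 / 2)) =O[𝓝 0] (· ^ 6) := by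
  have h := ((isBigO_sum_add_log_one_sub 2).comp_tendsto
    ((continuous_pow 2).tendsto' (0 : ℝ) 0 (zero_pow two_ne_zero))).neg_left
  refine h.congr (fun s => ?_) (fun s => ?_)
  · simp [Finset.sum_range_succ]; ring
  · simp [← pow_mul]

theorem isBigO_sub_log_one_add_div_self_sub :
    (fun y : ℝ => (y - log (1 + y)) / y - (y / 2 - y ^ 2 / 3 + y ^ 3 / 4)) =O[𝓝 0] (· ^ 4) := by
  have h := ((isBigO_sum_neg_add_log_one_add 4).mul (isBigO_refl (fun y : ℝ => y⁻¹) _)).neg_left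
  refine h.congr (fun y => ?_) (fun y => ?_) <;> rcases eq_or_ne y 0 with rfl | hy
  · simp
  · simp [Finset.sum_range_succ]; field_simp; ring
  · simp
  · field_simp

theorem isBigO_pow_mul_of_continuous {q : ℝ → ℝ} (hq : Continuous q) (m : ℕ) :
    (fun s => s ^ m * q s) =O[𝓝 0] (· ^ m) := by
  simpa using (isBigO_refl (· ^ m) (𝓝 (0 : ℝ))).mul ((hq.tendsto 0).isBigO_one ℝ)

theorem Asymptotics.IsBigO.cubic_sub_cubic {α : Type*} {l : Filter α} {f g h : α → ℝ} {a b : ℝ}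
    (hfg : (fun x => f x - g x) =O[l] h) (hf : Tendsto f l (𝓝 a)) (hg : Tendsto g l (𝓝 b)) :
    (fun x => (f x / 2 - f x ^ 2 / 3 + f x ^ 3 / 4) - (g x / 2 - g x ^ 2 / 3 + g x ^ 3 / 4))
      =O[l] h :=
  (hfg.mul (((((hf.add hg).div_const 3).const_sub (1 / 2)).add
    ((((hf.pow 2).add (hf.mul hg)).add (hg.pow 2)).div_const 4)).isBigO_one ℝ)).congr
      (fun x => by ring) (fun x => by ring)

theorem isEquivalent_log_one_add : (fun s : ℝ => log (1 + s)) ~[𝓝 0] id :=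
  isBigO_log_one_add_sub_self.trans_isLittleO (isLittleO_pow_id one_lt_two)

theorem eventually_log_one_add_ne_zero : ∀ᶠ s : ℝ in 𝓝[≠] 0, log (1 + s) ≠ 0 := by
  filter_upwards [self_mem_nhdsWithin,
    nhdsWithin_le_nhds (Ioi_mem_nhds (by norm_num : (-1 : ℝ) < 0))] with s hs hs'
  exact log_ne_zero_of_pos_of_ne_one (by linarith [Set.mem_Ioi.1 hs'])
    (by simpa using hs)

theorem Asymptotics.IsBigO.div_log_one_add_sub {f g : ℝ → ℝ} {n : ℕ}
    (h : (fun s => f s - g s * log (1 + s)) =O[𝓝[≠] 0] (· ^ (n + 1))) :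
    (fun s => f s / log (1 + s) - g s) =O[𝓝[≠] 0] (· ^ n) := by
  refine (h.mul (isEquivalent_log_one_add.inv.isBigO.mono nhdsWithin_le_nhds)).congr' ?_ ?_
  · filter_upwards [eventually_log_one_add_ne_zero] with s hs
    simp only [Pi.inv_apply]
    field_simp
  · filter_upwards [self_mem_nhdsWithin] with s hs
    simp only [Pi.inv_apply, id]
    rw [pow_succ, mul_inv_cancel_right₀ hs]

theorem isBigO_neg_log_one_sub_sq_div_log_one_add_sub :
    (fun s : ℝ => -log (1 - s ^ 2) / log (1 + s) - (s + s ^ 2 / 2 + 5 * s ^ 3 / 12))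
      =O[𝓝[≠] 0] (· ^ 4) := by
  refine IsBigO.div_log_one_add_sub (IsBigO.mono ?_ nhdsWithin_le_nhds)
  have hD := isBigO_neg_log_one_sub_sq_sub.trans (isLittleO_pow_pow (by norm_num : 5 < 6)).isBigO
  have hYL : (fun s : ℝ => (s + s ^ 2 / 2 + 5 * s ^ 3 / 12) *
      (log (1 + s) - (s - s ^ 2 / 2 + s ^ 3 / 3))) =O[𝓝 0] (· ^ 5) :=
    ((isBigO_pow_mul_of_continuous (q := fun s => 1 + s / 2 + 5 * s ^ 2 / 12) (by fun_prop) 1).mul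
      isBigO_log_one_add_sub_cubic).congr (fun s => by ring) (fun s => by ring)
  have hpoly :=
    isBigO_pow_mul_of_continuous (q := fun s : ℝ => 1 / 24 - 5 * s / 36) (by fun_prop) 5
  exact ((hD.sub hYL).add hpoly).congr_left fun s => by ring

theorem isBigO_cubic_id :
    (fun s : ℝ => s + s ^ 2 / 2 + 5 * s ^ 3 / 12) =O[𝓝[≠] 0] id :=
  ((isBigO_pow_mul_of_continuous (q := fun s => 1 + s / 2 + 5 * s ^ 2 / 12) (by fun_prop) 1).congr
    (fun s => by ring) (fun s => by simp)).mono nhdsWithin_le_nhds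

theorem isBigO_neg_log_one_sub_sq_div_log_one_add :
    (fun s : ℝ => -log (1 - s ^ 2) / log (1 + s)) =O[𝓝[≠] 0] id :=
  ((isBigO_neg_log_one_sub_sq_div_log_one_add_sub.trans
    ((isLittleO_pow_id (by norm_num : 1 < 4)).isBigO.mono nhdsWithin_le_nhds)).add
      isBigO_cubic_id).congr_left fun s => by ring

noncomputable def rampMass (s : ℝ) : ℝ :=
  (-log (1 - s) / log (1 + s) - 1 - log (-log (1 - s) / log (1 + s))) /
    (-log (1 - s) - log (1 + s))

theorem rampMass_eventuallyEq : rampMass =ᶠ[𝓝[≠] 0] fun s =>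
    (-log (1 - s ^ 2) / log (1 + s) - log (1 + -log (1 - s ^ 2) / log (1 + s))) /
      (-log (1 - s ^ 2) / log (1 + s)) / log (1 + s) := by
  filter_upwards [eventually_log_one_add_ne_zero,
    nhdsWithin_le_nhds (Ioo_mem_nhds (by norm_num : (-1 : ℝ) < 0) one_pos)] with s hL hs
  have hD : -log (1 - s) - log (1 + s) = -log (1 - s ^ 2) := by
    rw [show 1 - s ^ 2 = (1 - s) * (1 + s) by ring,
      log_mul (by linarith [hs.2]) (by linarith [hs.1])]
    ring
  have hq : -log (1 - s) / log (1 + s) = 1 + -log (1 - s ^ 2) / log (1 + s) := by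
    rw [← hD]; field_simp; ring
  rw [rampMass, hq, hD, div_div, div_mul_cancel₀ _ hL]
  ring_nf

theorem isBigO_rampMass_sub :
    (fun s => rampMass s - (1 / 2 + s / 6 + s ^ 2 / 24)) =O[𝓝[≠] 0] (· ^ 3) := by
  set y := fun s : ℝ => -log (1 - s ^ 2) / log (1 + s)
  set Y := fun s : ℝ => s + s ^ 2 / 2 + 5 * s ^ 3 / 12
  have hid : Tendsto id (𝓝[≠] (0 : ℝ)) (𝓝 0) := tendsto_id.mono_left nhdsWithin_le_nhds
  have hy0 := isBigO_neg_log_one_sub_sq_div_log_one_add.trans_tendsto hid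
  have hψ : (fun s => (y s - log (1 + y s)) / y s - (y s / 2 - y s ^ 2 / 3 + y s ^ 3 / 4))
      =O[𝓝[≠] 0] (· ^ 4) :=
    (isBigO_sub_log_one_add_div_self_sub.comp_tendsto hy0).trans
      (isBigO_neg_log_one_sub_sq_div_log_one_add.pow 4)
  have hcubic := isBigO_neg_log_one_sub_sq_div_log_one_add_sub.cubic_sub_cubic hy0
    (isBigO_cubic_id.trans_tendsto hid)
  have hpoly : (fun s => (Y s / 2 - Y s ^ 2 / 3 + Y s ^ 3 / 4) -
      (1 / 2 + s / 6 + s ^ 2 / 24) * (s - s ^ 2 / 2 + s ^ 3 / 3)) =O[𝓝[≠] 0] (· ^ 4) :=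
    ((isBigO_pow_mul_of_continuous (q := fun s => -1 / 48 + 25 * s / 72 + 247 * s ^ 2 / 864
      + 5 * s ^ 3 / 24 + 25 * s ^ 4 / 384 + 125 * s ^ 5 / 6912) (by fun_prop) 4).congr_left
        fun s => by ring).mono nhdsWithin_le_nhds
  have hlog : (fun s : ℝ => (1 / 2 + s / 6 + s ^ 2 / 24) *
      (log (1 + s) - (s - s ^ 2 / 2 + s ^ 3 / 3))) =O[𝓝[≠] 0] (· ^ 4) :=
    ((((by fun_prop : Continuous fun s : ℝ => 1 / 2 + s / 6 + s ^ 2 / 24).tendsto 0).isBigO_one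
      ℝ).mul isBigO_log_one_add_sub_cubic |>.congr_right fun s => by ring).mono nhdsWithin_le_nhds
  refine (IsBigO.div_log_one_add_sub (f := fun s => (y s - log (1 + y s)) / y s)
    (g := fun s => 1 / 2 + s / 6 + s ^ 2 / 24) (((hψ.add hcubic).add hpoly).sub hlog |>.congr_left
      fun s => by ring)).congr' ?_ EventuallyEq.rfl
  filter_upwards [rampMass_eventuallyEq] with s hs
  rw [hs]

theorem log_one_add_one_div_sub_one {x : ℝ} (hx : 1 < x) :
    log (1 + 1 / (x - 1)) = -log (1 - 1 / x) := by
  have hx1 : x - 1 ≠ 0 := sub_ne_zero.2 hx.ne'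
  rw [← log_inv]
  congr 1
  field_simp
  ring

theorem log_one_add_one_div_pos_lt {x : ℝ} (hx : 1 < x) :
    0 < log (1 + 1 / x) ∧ log (1 + 1 / x) < log (1 + 1 / (x - 1)) := by
  have hx0 : 0 < 1 / x := by positivity
  have hx1 : 0 < x - 1 := by linarith
  exact ⟨log_pos (by linarith), log_lt_log (by linarith) (by gcongr; linarith)⟩

theorem setIntegral_rising_eq_rampMass {c r : ℝ} (hc : 0 < c) (hr : 0 < r) :
    ∫ x in Set.Ioc (c * log (1 + 1 / (r + 1))) (c * log (1 + 1 / r)),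
        c * ((x - c * log (1 + 1 / (r + 1))) / (c * log (1 + 1 / r) - c * log (1 + 1 / (r + 1)))) *
          (x ^ 2)⁻¹
      = rampMass (-(1 / (r + 1))) := by
  have hlog := log_one_add_one_div_pos_lt (x := r + 1) (by linarith)
  have hshift := log_one_add_one_div_sub_one (x := r + 1) (by linarith)
  rw [add_sub_cancel_right] at hlog hshift
  rw [setIntegral_rising_ramp hc hlog.1 hlog.2, rampMass, hshift]
  simp only [sub_neg_eq_add, ← sub_eq_add_neg]
  ring_nf

theorem setIntegral_falling_eq_rampMass {c r : ℝ} (hc : 0 < c) (hr : 1 < r) :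
    ∫ x in Set.Ioc (c * log (1 + 1 / r)) (c * log (1 + 1 / (r - 1))),
        c * ((c * log (1 + 1 / (r - 1)) - x) / (c * log (1 + 1 / (r - 1)) - c * log (1 + 1 / r))) *
          (x ^ 2)⁻¹
      = rampMass (1 / r) := by
  have hlog := log_one_add_one_div_pos_lt hr
  rw [setIntegral_falling_ramp hc hlog.1 hlog.2, log_one_add_one_div_sub_one hr, rampMass]

theorem tendsto_one_div_nat_nhdsNE :
    Tendsto (fun k : ℕ => 1 / (k : ℝ)) atTop (𝓝[≠] 0) :=
  tendsto_nhdsWithin_iff.2 ⟨tendsto_one_div_atTop_nhds_zero_nat,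
    eventually_ge_atTop 1 |>.mono fun k hk => by simp; omega⟩

theorem tendsto_neg_one_div_nat_add_one_nhdsNE :
    Tendsto (fun k : ℕ => -(1 / ((k : ℝ) + 1))) atTop (𝓝[≠] 0) :=
  tendsto_nhdsWithin_iff.2 ⟨by simpa using (tendsto_one_div_add_atTop_nhds_zero_nat (𝕜 := ℝ)).neg,
    Eventually.of_forall fun k => by simp; positivity⟩

theorem isBigO_neg_one_div_nat_add_one_pow_three :
    (fun k : ℕ => (-(1 / ((k : ℝ) + 1))) ^ 3) =O[atTop] fun k => 1 / (k : ℝ) ^ 3 := by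
  refine IsBigO.of_bound 1 ?_
  filter_upwards [eventually_ge_atTop 1] with k hk
  have hk : (1 : ℝ) ≤ k := by exact_mod_cast hk
  rw [one_mul, norm_pow, norm_neg, norm_div, norm_div, norm_one, norm_pow,
    norm_of_nonneg (by positivity : (0 : ℝ) ≤ k + 1), norm_of_nonneg (by positivity : (0 : ℝ) ≤ k),
    div_pow, one_pow]
  gcongr
  linarith

theorem isBigO_quadratic_shift :
    (fun k : ℕ => (1 / 2 + -(1 / ((k : ℝ) + 1)) / 6 + (-(1 / ((k : ℝ) + 1))) ^ 2 / 24)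
        - (1 / 2 - 1 / (6 * (k : ℝ)) + 5 / (24 * (k : ℝ) ^ 2)))
      =O[atTop] fun k => 1 / (k : ℝ) ^ 3 := by
  refine IsBigO.of_bound 1 ?_
  filter_upwards [eventually_ge_atTop 1] with k hk
  have hk : (1 : ℝ) ≤ k := by exact_mod_cast hk
  have hdiff : (1 / 2 + -(1 / ((k : ℝ) + 1)) / 6 + (-(1 / ((k : ℝ) + 1))) ^ 2 / 24)
      - (1 / 2 - 1 / (6 * (k : ℝ)) + 5 / (24 * (k : ℝ) ^ 2))
      = -((6 * k + 5) / (24 * k ^ 2 * (k + 1) ^ 2)) := by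
    field_simp
    ring
  rw [hdiff, norm_neg, one_mul, norm_of_nonneg (by positivity), norm_of_nonneg (by positivity),
    div_le_div_iff₀ (by positivity) (by positivity)]
  nlinarith

theorem stmt18 (c : ℝ) (hc : 0 < c) :
    (fun k : ℕ =>
        (∫ x in Set.Ioc (c * Real.log (1 + 1 / ((k : ℝ) + 1))) (c * Real.log (1 + 1 / (k : ℝ))),
          c * ((x - c * Real.log (1 + 1 / ((k : ℝ) + 1))) /
              (c * Real.log (1 + 1 / (k : ℝ)) - c * Real.log (1 + 1 / ((k : ℝ) + 1)))) *
            (x ^ 2)⁻¹)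
        - (1 / 2 - 1 / (6 * (k : ℝ)) + 5 / (24 * (k : ℝ) ^ 2)))
      =O[atTop] (fun k : ℕ => 1 / (k : ℝ) ^ 3) ∧
    (fun k : ℕ =>
        (∫ x in Set.Ioc (c * Real.log (1 + 1 / (k : ℝ))) (c * Real.log (1 + 1 / ((k : ℝ) - 1))),
          c * ((c * Real.log (1 + 1 / ((k : ℝ) - 1)) - x) /
              (c * Real.log (1 + 1 / ((k : ℝ) - 1)) - c * Real.log (1 + 1 / (k : ℝ)))) *
            (x ^ 2)⁻¹)
        - (1 / 2 + 1 / (6 * (k : ℝ)) + 1 / (24 * (k : ℝ) ^ 2)))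
      =O[atTop] (fun k : ℕ => 1 / (k : ℝ) ^ 3) := by
  constructor
  · have h := isBigO_rampMass_sub.comp_tendsto tendsto_neg_one_div_nat_add_one_nhdsNE
    refine ((h.trans isBigO_neg_one_div_nat_add_one_pow_three).add isBigO_quadratic_shift).congr'
      ?_ EventuallyEq.rfl
    filter_upwards [eventually_ge_atTop 1] with k hk
    rw [Function.comp_apply, setIntegral_rising_eq_rampMass hc (by positivity)]
    ring
  · have h := isBigO_rampMass_sub.comp_tendsto tendsto_one_div_nat_nhdsNE
    refine h.congr' ?_ (Eventually.of_forall fun k => by simp)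
    filter_upwards [eventually_ge_atTop 2] with k hk
    rw [Function.comp_apply, setIntegral_falling_eq_rampMass hc (by exact_mod_cast hk)]
    ring
end
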